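/- Let X be a topological space and let F be a family of continuous real-valued functions on X which is an eventually fragmented family of functions on X. Then the closure of F in the topology of uniform convergence on X is also an eventually fragmented family. Likewise, if F is a fragmented family, then its closure in the topology of uniform convergence (indeed even its closure in the topology of pointwise convergence) is a fragmented family. -/

import Mathlib

/-!
Pointwise limits preserve non-strict oscillation bounds on a set, so a fragmented family stays
fragmented under pointwise closure. For the uniform closure, approximate a sequence `gₙ` of limits by
`fₙ ∈ F` with `‖gₙ - fₙ‖∞ < 1/(n+1)` and pass to a fragmented subsequence of `fₙ`. For a given
`ε`, all but finitely many of the corresponding `gₙ` are `ε`-close to that fragmented family, and the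
remaining finitely many are continuous (uniform limits of continuous functions), hence
fragmented on their own.
-/

open Filter Topology Set

/-- A family of real-valued functions on a topological space is fragmented. -/
def IsFragmentedFamily {K : Type*} [TopologicalSpace K] (F : Set (K → ℝ)) : Prop :=
  ∀ A : Set K, A.Nonempty → ∀ ε : ℝ, 0 < ε → ∃ O : Set K, IsOpen O ∧
    (O ∩ A).Nonempty ∧ ∀ f ∈ F, ∀ x ∈ O ∩ A, ∀ y ∈ O ∩ A, |f x - f y| < ε

/-- A family is eventually fragmented if every sequence in it has a subsequence which is
a fragmented family. -/
def IsEventuallyFragmented {K : Type*} [TopologicalSpace K] (F : Set (K → ℝ)) : Prop :=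
  ∀ f : ℕ → K → ℝ, (∀ n, f n ∈ F) →
    ∃ ψ : ℕ → ℕ, StrictMono ψ ∧ IsFragmentedFamily (Set.range (fun k => f (ψ k)))

theorem isClosed_setOf_forall_abs_sub_le {X : Type*} (S : Set X) (c : ℝ) :
    IsClosed {g : X → ℝ | ∀ x ∈ S, ∀ y ∈ S, |g x - g y| ≤ c} := by
  simp only [ofPred_forall]
  exact isClosed_biInter fun x _ => isClosed_biInter fun y _ =>
    isClosed_le (by fun_prop) continuous_const

section Fragmented

variable {X : Type*} [TopologicalSpace X]

theorem isFragmentedFamily_of_finite {F : Set (X → ℝ)} (hfin : F.Finite)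
    (hF : ∀ f ∈ F, Continuous f) : IsFragmentedFamily F := by
  rintro A ⟨a, ha⟩ ε hε
  refine ⟨⋂ f ∈ F, f ⁻¹' Metric.ball (f a) (ε / 2),
    hfin.isOpen_biInter fun f hf => Metric.isOpen_ball.preimage (hF f hf),
    ⟨a, mem_iInter₂.2 fun f _ => Metric.mem_ball_self (by positivity), ha⟩, ?_⟩
  rintro f hf x ⟨hxO, -⟩ y ⟨hyO, -⟩
  have hx : dist (f x) (f a) < ε / 2 := mem_iInter₂.1 hxO f hf
  have hy : dist (f y) (f a) < ε / 2 := mem_iInter₂.1 hyO f hf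
  calc |f x - f y| = dist (f x) (f y) := (Real.dist_eq _ _).symm
    _ ≤ dist (f x) (f a) + dist (f y) (f a) := dist_triangle_right _ _ _
    _ < ε := by linarith

theorem IsFragmentedFamily.union {F G : Set (X → ℝ)} (hF : IsFragmentedFamily F)
    (hG : IsFragmentedFamily G) : IsFragmentedFamily (F ∪ G) := by
  intro A hA ε hε
  obtain ⟨O₁, hO₁, hO₁A, hF'⟩ := hF A hA ε hε
  obtain ⟨O₂, hO₂, hO₂A, hG'⟩ := hG (O₁ ∩ A) hO₁A ε hε
  refine ⟨O₂ ∩ O₁, hO₂.inter hO₁, by rwa [inter_assoc], ?_⟩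
  rintro f (hf | hf) x hx y hy
  · exact hF' f hf x ⟨hx.1.2, hx.2⟩ y ⟨hy.1.2, hy.2⟩
  · exact hG' f hf x ⟨hx.1.1, hx.1.2, hx.2⟩ y ⟨hy.1.1, hy.1.2, hy.2⟩

theorem isFragmentedFamily_of_forall_uniform_approx {H : Set (X → ℝ)}
    (hH : ∀ ε > 0, ∃ G, IsFragmentedFamily G ∧ ∀ h ∈ H, ∃ g ∈ G, ∀ x, dist (h x) (g x) < ε) :
    IsFragmentedFamily H := by
  intro A hA ε hε
  obtain ⟨G, hG, hHG⟩ := hH (ε / 3) (by positivity)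
  obtain ⟨O, hO, hOA, hG'⟩ := hG A hA (ε / 3) (by positivity)
  refine ⟨O, hO, hOA, fun h hh x hx y hy => ?_⟩
  obtain ⟨g, hg, hhg⟩ := hHG h hh
  have hgxy := hG' g hg x hx y hy
  rw [← Real.dist_eq] at hgxy ⊢
  calc dist (h x) (h y) ≤ dist (h x) (g x) + dist (g x) (g y) + dist (g y) (h y) :=
        dist_triangle4 _ _ _ _
    _ < ε := by linarith [hhg x, dist_comm (g y) (h y) ▸ hhg y]

theorem isFragmentedFamily_range_of_eventually_dist_lt {f g : ℕ → X → ℝ}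
    (hf : IsFragmentedFamily (range f)) (hg : ∀ n, Continuous (g n))
    (hfg : ∀ ε > 0, ∀ᶠ n in atTop, ∀ x, dist (g n x) (f n x) < ε) :
    IsFragmentedFamily (range g) := by
  refine isFragmentedFamily_of_forall_uniform_approx fun ε hε => ?_
  obtain ⟨N, hN⟩ := eventually_atTop.1 (hfg ε hε)
  refine ⟨range f ∪ g '' Iio N, hf.union <| isFragmentedFamily_of_finite
    ((finite_Iio N).image g) (forall_mem_image.2 fun n _ => hg n), ?_⟩
  rintro _ ⟨n, rfl⟩
  rcases lt_or_ge n N with hn | hn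
  · exact ⟨g n, Or.inr ⟨n, hn, rfl⟩, fun x => by simpa using hε⟩
  · exact ⟨f n, Or.inl ⟨n, rfl⟩, hN n hn⟩

theorem IsFragmentedFamily.closure {F : Set (X → ℝ)} (hF : IsFragmentedFamily F) :
    IsFragmentedFamily (_root_.closure F) := by
  intro A hA ε hε
  obtain ⟨O, hO, hOA, hF'⟩ := hF A hA (ε / 2) (by positivity)
  have hcl : _root_.closure F ⊆ {g | ∀ x ∈ O ∩ A, ∀ y ∈ O ∩ A, |g x - g y| ≤ ε / 2} :=
    closure_minimal (fun f hf x hx y hy => (hF' f hf x hx y hy).le)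
      (isClosed_setOf_forall_abs_sub_le _ _)
  exact ⟨O, hO, hOA, fun g hg x hx y hy => (hcl hg x hx y hy).trans_lt (by linarith)⟩

end Fragmented

theorem UniformFun.exists_forall_dist_lt_of_mem_closure {α β : Type*} [PseudoMetricSpace β]
    {F : Set (α → β)} {h : UniformFun α β} (hh : h ∈ closure (UniformFun.ofFun '' F))
    {ε : ℝ} (hε : 0 < ε) : ∃ f ∈ F, ∀ x, dist (UniformFun.toFun h x) (f x) < ε := by
  obtain ⟨_, ⟨f, hf, rfl⟩, hhf⟩ := EMetric.mem_closure_iff.1 hh (ENNReal.ofReal ε) (by simpa)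
  refine ⟨f, hf, fun x => ?_⟩
  exact edist_lt_ofReal.1 (UniformFun.edist_eval_le.trans_lt hhf)

theorem IsEventuallyFragmented.uniformFun_closure {X : Type*} [TopologicalSpace X]
    {F : Set (X → ℝ)} (hF : ∀ f ∈ F, Continuous f) (hEF : IsEventuallyFragmented F) :
    IsEventuallyFragmented
      (⇑UniformFun.toFun '' closure (⇑UniformFun.ofFun '' F : Set (UniformFun X ℝ))) := by
  intro g hg
  have hg' : ∀ n, UniformFun.ofFun (g n) ∈ closure (UniformFun.ofFun '' F) := fun n => by
    obtain ⟨h, hh, rfl⟩ := hg n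
    exact hh
  have hcont : ∀ n, Continuous (g n) := fun n =>
    closure_minimal (by rintro _ ⟨f, hf, rfl⟩; exact hF f hf)
      (UniformFun.isClosed_setOfPred_continuous X) (hg' n)
  choose f hfF hfg using fun n : ℕ =>
    UniformFun.exists_forall_dist_lt_of_mem_closure (hg' n) (Nat.one_div_pos_of_nat (n := n))
  obtain ⟨ψ, hψ, hfrag⟩ := hEF f hfF
  refine ⟨ψ, hψ, isFragmentedFamily_range_of_eventually_dist_lt hfrag (fun k => hcont _)
    fun ε hε => ?_⟩
  have hsmall : ∀ᶠ n : ℕ in atTop, 1 / ((n : ℝ) + 1) < ε :=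
    (tendsto_order.1 tendsto_one_div_add_atTop_nhds_zero_nat).2 ε hε
  filter_upwards [hψ.tendsto_atTop.eventually hsmall] with k hk x using (hfg (ψ k) x).trans hk

/-- For a family `F` of continuous real-valued functions on a
topological space `X`: if `F` is eventually fragmented, so is its closure in the topology
of uniform convergence; and if `F` is fragmented, so is its closure in the topology of
pointwise convergence (hence also its uniform closure). -/
theorem closure_of_fragmented_family
    {X : Type*} [TopologicalSpace X] (F : Set (X → ℝ)) (hF : ∀ f ∈ F, Continuous f) :
    (IsEventuallyFragmented F →
      IsEventuallyFragmented
        (⇑UniformFun.toFun '' closure (⇑UniformFun.ofFun '' F : Set (UniformFun X ℝ)))) ∧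
    (IsFragmentedFamily F → IsFragmentedFamily (closure F)) :=
  ⟨IsEventuallyFragmented.uniformFun_closure hF, IsFragmentedFamily.closure⟩
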